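/- arXiv:1509.03590 — 2 statements merged into one kernel-verified Lean document; each statement's English description precedes it below -/
import Mathlib

section
/- Let a finite set of intervals d_i = [a_i,b_i], i = 1,…,k, be given, each represented by the point P_i = (h_i, F_i) in the plane, where h_i = ((b_i - a_i)/2)^(1/N) and F_i = f(m_i) with m_i = (a_i+b_i)/2. Define the characteristic R_i(H̃) = F_i - H̃·h_i for H̃ > 0. Then an interval d_t is nondominated (i.e., there exists H̃ > 0 such that R_t(H̃) ≤ R_j(H̃) for all j) if and only if the point P_t lies on the lower-right convex hull of the set {P_1,…,P_k}; more precisely, P_t is a point of the convex hull boundary supported by some line of positive slope H̃ from below. -/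
theorem nondominated_iff_on_lower_right_convex_hull
    (k : ℕ) (h F : Fin k → ℝ) (hpos : ∀ i, 0 < h i) (t : Fin k) :
    (∃ H > (0:ℝ), ∀ j, F t - H * h t ≤ F j - H * h j) ↔
    (∃ H > (0:ℝ), ∀ q ∈ convexHull ℝ (Set.range (fun i => (h i, F i))),
      F t - H * h t ≤ q.2 - H * q.1) := by
  constructor
  · rintro ⟨H, hH, hle⟩
    refine ⟨H, hH, ?_⟩
    have hlin : IsLinearMap ℝ (fun q : ℝ × ℝ => q.2 - H * q.1) := by
      constructor
      · intro p q; simp [Prod.fst_add, Prod.snd_add]; ring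
      · intro c q; simp [Prod.smul_fst, Prod.smul_snd, smul_eq_mul]; ring
    have hconv : Convex ℝ {q : ℝ × ℝ | F t - H * h t ≤ q.2 - H * q.1} :=
      convex_halfSpace_ge hlin (F t - H * h t)
    have hsub : Set.range (fun i => (h i, F i)) ⊆
        {q : ℝ × ℝ | F t - H * h t ≤ q.2 - H * q.1} := by
      rintro _ ⟨j, rfl⟩; exact hle j
    exact fun q hq => convexHull_min hsub hconv hq
  · rintro ⟨H, hH, hle⟩
    exact ⟨H, hH, fun j => hle _ (subset_convexHull ℝ _ ⟨j, rfl⟩)⟩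
end

section
/- Let points P_i = (h_i, F_i), i = 1,…,k, in ℝ² with h_i > 0 be given, and define R_i(H) = F_i - H·h_i for H > 0. If three indices i, j, t satisfy h_i < h_t < h_j and the point P_t lies strictly above the line segment joining P_i and P_j, then for every H > 0 either R_i(H) < R_t(H) or R_j(H) < R_t(H); i.e., the interval corresponding to P_t is dominated for every positive estimate H. -/
theorem point_above_segment_is_dominated
    (hi ht hj Fi Ft Fj : ℝ) (hpos : 0 < hi)
    (h1 : hi < ht) (h2 : ht < hj)
    (habove : Ft > Fi + (Fj - Fi) / (hj - hi) * (ht - hi)) :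
    ∀ H > (0:ℝ), Fi - H * hi < Ft - H * ht ∨ Fj - H * hj < Ft - H * ht := by
  intro H hH
  by_contra hc
  push_neg at hc
  obtain ⟨c1, c2⟩ := hc
  have hd : (0:ℝ) < hj - hi := by linarith
  have h' : (Fj - Fi) * (ht - hi) / (hj - hi) < Ft - Fi := by
    have : (Fj - Fi) / (hj - hi) * (ht - hi) = (Fj - Fi) * (ht - hi) / (hj - hi) := by
      ring
    linarith [this ▸ habove]
  have key : (Fj - Fi) * (ht - hi) < (Ft - Fi) * (hj - hi) := (div_lt_iff₀ hd).mp h'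
  nlinarith [key]
end
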